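/- arXiv:1303.5822 — 5 statements merged into one kernel-verified Lean document; each statement's English description precedes it below -/
import Mathlib

section
/- For integers B ≥ 1, s ≥ 0 and a prime power (or just real) q^r > 1, the quantity Q = ∑_{k=0}^{s} C(B + k - 1, k) / q^{rk} equals (q^r/(q^r - 1))^B − B · C(B + s, B) · ∫_0^{1/q^r} ((1/q^r − t)^s / (1−t)^{B+s+1}) dt. -/
theorem stmt_5 (B s : ℕ) (hB : 1 ≤ B) (qr : ℝ) (hqr : 1 < qr) :
    ∑ k ∈ Finset.range (s + 1), ((B + k - 1).choose k : ℝ) / qr ^ k =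
      (qr / (qr - 1)) ^ B -
        (B : ℝ) * ((B + s).choose B : ℝ) *
          ∫ t in (0:ℝ)..(1 / qr), (1 / qr - t) ^ s / (1 - t) ^ (B + s + 1) := by
  obtain ⟨B', rfl⟩ : ∃ B', B = B' + 1 := ⟨B - 1, by omega⟩
  set x : ℝ := 1 / qr with hxdef
  have hq0 : (0:ℝ) < qr := lt_trans one_pos hqr
  have hx0 : 0 < x := by positivity
  have hx1 : x < 1 := by rw [hxdef, div_lt_one hq0]; exact hqr
  set D : ℝ := ((B' + 1 : ℕ) : ℝ) * (((B' + 1 + s).choose (B' + 1) : ℕ) : ℝ) with hD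
  have hDpos : 0 < D := by
    apply mul_pos (by positivity)
    exact_mod_cast Nat.choose_pos (by omega)
  set d : ℕ → ℝ := fun k => (((B' + k).choose k : ℕ) : ℝ) / D with hd
  -- recursion
  have hrecN : ∀ k : ℕ, (k + 1) * (B' + (k + 1)).choose (k + 1)
      = (B' + 1 + k) * (B' + k).choose k := by
    intro k
    have h := Nat.add_one_mul_choose_eq (B' + k) k
    have e1 : B' + (k + 1) = B' + k + 1 := by omega
    have e2 : B' + 1 + k = B' + k + 1 := by omega
    rw [e1, e2, h]; ring
  have hrec : ∀ k : ℕ, ((k : ℝ) + 1) * d (k + 1) = ((B' : ℝ) + 1 + k) * d k := by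
    intro k
    simp only [hd]
    rw [mul_div_assoc', mul_div_assoc']
    congr 1
    exact_mod_cast hrecN k
  have hnorm : ((s : ℝ) + 1) * d (s + 1) = 1 := by
    have hN : (s + 1) * (B' + (s + 1)).choose (s + 1)
        = (B' + 1) * (B' + 1 + s).choose (B' + 1) := by
      have h1 := Nat.choose_succ_right_eq (B' + 1 + s) s
      have h2 : (B' + 1 + s).choose (B' + 1 + s - s) = (B' + 1 + s).choose s :=
        Nat.choose_symm (by omega)
      have e3 : B' + 1 + s - s = B' + 1 := by omega
      have e4 : B' + (s + 1) = B' + 1 + s := by omega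
      rw [e3] at h1 h2
      rw [e4]
      calc (s + 1) * (B' + 1 + s).choose (s + 1)
          = (B' + 1 + s).choose (s + 1) * (s + 1) := by ring
        _ = (B' + 1 + s).choose s * (B' + 1) := h1
        _ = (B' + 1) * (B' + 1 + s).choose (B' + 1) := by rw [← h2]; ring
    simp only [hd, hD]
    rw [mul_div_assoc', div_eq_one_iff_eq (by rw [← hD]; positivity)]
    exact_mod_cast hN
  set P : ℕ → ℝ → ℝ := fun k t => (k : ℝ) * d k * (x - t) ^ (k - 1) / (1 - t) ^ (B' + 1 + k)
    with hP
  have huIcc : Set.uIcc (0:ℝ) x = Set.Icc 0 x := Set.uIcc_of_le hx0.le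
  have hderiv : ∀ t ∈ Set.uIcc (0:ℝ) x, ∀ k : ℕ,
      HasDerivAt (fun u => d k * ((x - u) ^ k / (1 - u) ^ (B' + 1 + k)))
        (P (k + 1) t - P k t) t := by
    intro t ht k
    rw [huIcc] at ht
    have ht1 : (0:ℝ) < 1 - t := by
      have := ht.2
      linarith
    have hne : (1 - t) ^ (B' + 1 + k) ≠ 0 := pow_ne_zero _ (ne_of_gt ht1)
    have hu : HasDerivAt (fun u : ℝ => (x - u) ^ k)
        ((k : ℝ) * (x - t) ^ (k - 1) * (0 - 1)) t :=
      ((hasDerivAt_const t x).sub (hasDerivAt_id t)).pow k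
    have hv : HasDerivAt (fun u : ℝ => (1 - u) ^ (B' + 1 + k))
        (((B' + 1 + k : ℕ) : ℝ) * (1 - t) ^ (B' + 1 + k - 1) * (0 - 1)) t :=
      ((hasDerivAt_const t 1).sub (hasDerivAt_id t)).pow _
    have hdiv := (hu.div hv hne).const_mul (d k)
    refine hdiv.congr_deriv (Eq.symm ?_)
    have e1 : B' + 1 + k - 1 = B' + k := by omega
    rw [e1]
    simp only [hP]
    push_cast
    rw [hrec k]
    cases k with
    | zero =>
      simp only [Nat.cast_zero, pow_zero]
      field_simp
      ring
    | succ k' =>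
      have e2 : k' + 1 - 1 = k' := by omega
      rw [e2]
      push_cast
      field_simp
      ring
  have key : ∀ t ∈ Set.uIcc (0:ℝ) x,
      HasDerivAt (fun u => ∑ k ∈ Finset.range (s + 1),
          d k * ((x - u) ^ k / (1 - u) ^ (B' + 1 + k)))
        ((x - t) ^ s / (1 - t) ^ (B' + 1 + s + 1)) t := by
    intro t ht
    have h := HasDerivAt.fun_sum (fun k (_ : k ∈ Finset.range (s + 1)) => hderiv t ht k)
    rw [Finset.sum_range_sub (fun k => P k t)] at h
    refine h.congr_deriv (Eq.symm ?_)
    simp only [hP, Nat.add_sub_cancel, Nat.cast_zero, zero_mul, zero_div, sub_zero,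
      Nat.cast_add, Nat.cast_one]
    rw [hnorm, one_mul]
    norm_num [Nat.add_assoc]
  have hcont : IntervalIntegrable (fun t => (x - t) ^ s / (1 - t) ^ (B' + 1 + s + 1))
      MeasureTheory.volume 0 x := by
    apply ContinuousOn.intervalIntegrable
    apply ContinuousOn.div
    · exact ((continuousOn_const.sub continuousOn_id).pow s)
    · exact ((continuousOn_const.sub continuousOn_id).pow _)
    · intro t ht
      rw [huIcc] at ht
      have : (0:ℝ) < 1 - t := by have := ht.2; linarith
      exact pow_ne_zero _ (ne_of_gt this)
  have hint := intervalIntegral.integral_eq_sub_of_hasDerivAt key hcont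
  beta_reduce at hint
  have hHx : ∑ k ∈ Finset.range (s + 1), d k * ((x - x) ^ k / (1 - x) ^ (B' + 1 + k))
      = d 0 / (1 - x) ^ (B' + 1) := by
    rw [Finset.sum_eq_single 0]
    · simp [div_eq_mul_inv]
    · intro k hk hk0
      simp [sub_self, zero_pow hk0]
    · intro h
      simp at h
  have hH0 : ∑ k ∈ Finset.range (s + 1), d k * ((x - 0) ^ k / (1 - 0) ^ (B' + 1 + k))
      = ∑ k ∈ Finset.range (s + 1), d k * x ^ k := by
    simp
  rw [hHx, hH0] at hint
  rw [hint, mul_sub, Finset.mul_sum]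
  have hDd : ∀ k : ℕ, D * d k = (((B' + k).choose k : ℕ) : ℝ) := by
    intro k
    simp only [hd]
    rw [mul_comm]
    exact div_mul_cancel₀ _ (ne_of_gt hDpos)
  have hsum : ∑ k ∈ Finset.range (s + 1), D * (d k * x ^ k)
      = ∑ k ∈ Finset.range (s + 1), (((B' + k).choose k : ℕ) : ℝ) / qr ^ k := by
    refine Finset.sum_congr rfl fun k _ => ?_
    rw [← mul_assoc, hDd k, hxdef, div_pow, one_pow, mul_one_div]
  rw [hsum]
  have hq1 : qr - 1 ≠ 0 := by linarith
  have h1x : (1:ℝ) - x = (qr - 1) / qr := by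
    rw [hxdef]
    field_simp
  have hpow : (qr / (qr - 1)) ^ (B' + 1) = 1 / (1 - x) ^ (B' + 1) := by
    rw [h1x, one_div, ← inv_pow, inv_div]
  have hterm : D * (d 0 / (1 - x) ^ (B' + 1)) = (qr / (qr - 1)) ^ (B' + 1) := by
    rw [← mul_div_assoc, hDd 0, hpow]
    norm_num
  rw [hterm]
  have hidx : ∀ k : ℕ, B' + 1 + k - 1 = B' + k := fun k => by omega
  simp only [hidx]
  ring
end

section
/- Let g ≥ 2 and let Δ be a finite set of positive integers r ≤ g−1 with associated positive integers B_r. Then ∑_{b ∈ V} ∏_{r ∈ Δ} C(B_r + b_r − 1, b_r) ≤ ∏_{r ∈ Δ} C(B_r + ⌊(g−1)/r⌋, ⌊(g−1)/r⌋), where V = { b = (b_r)_{r∈Δ} : b_r ≥ 0 and ∑_{r∈Δ} r·b_r ≤ g−1 }. -/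
lemma hockey (B m : ℕ) (hB : 1 ≤ B) :
    ∑ j ∈ Finset.range (m + 1), (B + j - 1).choose j = (B + m).choose m := by
  induction m with
  | zero => simp
  | succ m ih =>
      rw [Finset.sum_range_succ, ih]
      have h1 : B + (m + 1) - 1 = B + m := by omega
      have h2 : B + (m + 1) = (B + m) + 1 := by omega
      rw [h1, h2, Nat.choose_succ_succ' (B + m) m]

theorem stmt_7 (g : ℕ) (hg : 2 ≤ g) (Δ : Finset ℕ)
    (hΔ : ∀ r ∈ Δ, 1 ≤ r ∧ r ≤ g - 1) (B : ℕ → ℕ)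
    (hB : ∀ r ∈ Δ, 1 ≤ B r) :
    ∑ b ∈ (Δ.pi fun _ => Finset.range g).filter
        (fun b => ∑ r ∈ Δ.attach, r.1 * b r.1 r.2 ≤ g - 1),
      ∏ r ∈ Δ.attach, (B r.1 + b r.1 r.2 - 1).choose (b r.1 r.2) ≤
      ∏ r ∈ Δ, (B r + (g - 1) / r).choose ((g - 1) / r) := by
  have key : ∀ r ∈ Δ, (B r + (g - 1) / r).choose ((g - 1) / r)
      = ∑ j ∈ Finset.range ((g - 1) / r + 1), (B r + j - 1).choose j := by
    intro r hr
    exact (hockey (B r) ((g - 1) / r) (hB r hr)).symm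
  rw [Finset.prod_congr rfl key, Finset.prod_sum]
  apply Finset.sum_le_sum_of_subset
  intro b hb
  simp only [Finset.mem_filter, Finset.mem_pi, Finset.mem_range] at hb ⊢
  obtain ⟨hb1, hb2⟩ := hb
  intro r hr
  have hr1 := (hΔ r hr).1
  have hterm : r * b r hr ≤ g - 1 := by
    have h := Finset.single_le_sum (s := Δ.attach)
      (f := fun s : {x // x ∈ Δ} => s.1 * b s.1 s.2)
      (fun _ _ => Nat.zero_le _) (Finset.mem_attach _ ⟨r, hr⟩)
    exact le_trans h hb2
  have : b r hr ≤ (g - 1) / r := Nat.le_div_iff_mul_le hr1 |>.2 (by rwa [Nat.mul_comm] at hterm)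
  omega
end

section
/- Let g ≥ 2 and let Δ be a finite set of positive integers containing 1, with associated positive integers B_r for r ∈ Δ, and all r ∈ Δ satisfy r ≤ g−1. Let r_1, …, r_u be distinct elements of Δ \ {1}. Then ∑_{b ∈ V} ∏_{r ∈ Δ} C(B_r + b_r − 1, b_r) ≥ C(B_1 + g − 1, g − 1) + ∑_{i=1}^{u} ( C(B_{r_i} + ⌊(g−1)/r_i⌋, ⌊(g−1)/r_i⌋) − 1 ) · C(B_1 + ((g−1) mod r_i), (g−1) mod r_i), where V = { b : b_r ≥ 0, ∑_{r∈Δ} r·b_r ≤ g−1 }. -/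
open Finset

private lemma hs (A n : ℕ) :
    ∑ j ∈ Finset.range (n + 1), (A + j).choose j = (A + n + 1).choose n := by
  induction n with
  | zero => simp
  | succ n ih =>
    rw [Finset.sum_range_succ, ih]
    exact (Nat.choose_succ_succ (A + n + 1) n).symm

private lemma hs' (B n : ℕ) (hB : 1 ≤ B) :
    ∑ j ∈ Finset.range (n + 1), (B + j - 1).choose j = (B + n).choose n := by
  obtain ⟨A, rfl⟩ : ∃ A, B = A + 1 := ⟨B - 1, by omega⟩
  calc ∑ j ∈ Finset.range (n + 1), (A + 1 + j - 1).choose j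
      = ∑ j ∈ Finset.range (n + 1), (A + j).choose j := by
        apply Finset.sum_congr rfl; intro j _; congr 1; omega
    _ = (A + n + 1).choose n := hs A n
    _ = (A + 1 + n).choose n := by congr 1; omega

private lemma hs'' (B m : ℕ) (hB : 1 ≤ B) :
    ∑ a ∈ Finset.Icc 1 m, (B + a - 1).choose a = (B + m).choose m - 1 := by
  have hins : Finset.range (m + 1) = insert 0 (Finset.Icc 1 m) := by
    ext x; simp only [Finset.mem_range, Finset.mem_insert, Finset.mem_Icc]; omega
  have h0 : (0 : ℕ) ∉ Finset.Icc 1 m := by simp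
  have := hs' B m hB
  rw [hins, Finset.sum_insert h0] at this
  simp only [Nat.add_zero] at this
  have hc : (B - 1).choose 0 = 1 := Nat.choose_zero_right _
  omega

theorem stmt_10 (g : ℕ) (hg : 2 ≤ g) (Δ : Finset ℕ) (h1 : 1 ∈ Δ)
    (hΔ : ∀ r ∈ Δ, 1 ≤ r ∧ r ≤ g - 1) (B : ℕ → ℕ) (hB : ∀ r ∈ Δ, 1 ≤ B r)
    (u : ℕ) (rs : Fin u → ℕ) (hinj : Function.Injective rs)
    (hrs : ∀ i, rs i ∈ Δ ∧ rs i ≠ 1) :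
    (B 1 + (g - 1)).choose (g - 1) +
      ∑ i : Fin u,
        ((B (rs i) + (g - 1) / rs i).choose ((g - 1) / rs i) - 1) *
          (B 1 + (g - 1) % rs i).choose ((g - 1) % rs i) ≤
      ∑ b ∈ (Δ.pi fun _ => Finset.range g).filter
          (fun b => ∑ r ∈ Δ.attach, r.1 * b r.1 r.2 ≤ g - 1),
        ∏ r ∈ Δ.attach, (B r.1 + b r.1 r.2 - 1).choose (b r.1 r.2) := by
  classical
  set q := g - 1 with hqdef
  have hq1 : 1 ≤ q := by omega
  set F : ((a : ℕ) → a ∈ Δ → ℕ) → ℕ :=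
    fun b => ∏ r ∈ Δ.attach, (B r.1 + b r.1 r.2 - 1).choose (b r.1 r.2) with hF
  set Vset := (Δ.pi fun _ => Finset.range g).filter
      (fun b => ∑ r ∈ Δ.attach, r.1 * b r.1 r.2 ≤ q) with hVset
  -- the vectors
  set v0 : ℕ → (a : ℕ) → a ∈ Δ → ℕ := fun j r _ => if r = 1 then j else 0 with hv0
  set v2 : Fin u → ℕ → ℕ → (a : ℕ) → a ∈ Δ → ℕ :=
    fun i a c r _ => if r = rs i then a else if r = 1 then c else 0 with hv2
  have hri1 : ∀ i : Fin u, rs i ≠ 1 := fun i => (hrs i).2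
  have hriΔ : ∀ i : Fin u, rs i ∈ Δ := fun i => (hrs i).1
  have hri_pos : ∀ i : Fin u, 1 ≤ rs i := fun i => (hΔ _ (hriΔ i)).1
  -- membership of v0
  have memv0 : ∀ j, j ≤ q → v0 j ∈ Vset := by
    intro j hj
    rw [hVset, Finset.mem_filter]
    constructor
    · rw [Finset.mem_pi]
      intro a ha
      rw [hv0]
      dsimp only
      split <;> simp only [Finset.mem_range] <;> omega
    · have : ∑ r ∈ Δ.attach, r.1 * v0 j r.1 r.2
          = ∑ r ∈ Δ, r * (if r = 1 then j else 0) :=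
        Finset.sum_attach Δ (fun r => r * (if r = 1 then j else 0))
      rw [this]
      have : ∑ r ∈ Δ, r * (if r = 1 then j else 0)
          = ∑ r ∈ Δ, (if r = 1 then j else 0) := by
        apply Finset.sum_congr rfl
        intro r _
        split
        · next h => subst h; ring
        · ring
      rw [this, Finset.sum_ite_eq' Δ 1 (fun _ => j), if_pos h1]
      exact hj
  -- membership of v2
  have memv2 : ∀ (i : Fin u) (a c : ℕ), 1 ≤ a → a ≤ q / rs i → c ≤ q % rs i →
      v2 i a c ∈ Vset := by
    intro i a c ha1 ham hcs
    have hdiv : rs i * (q / rs i) + q % rs i = q := Nat.div_add_mod q (rs i)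
    have hale : a ≤ q := by
      have := Nat.div_le_self q (rs i); omega
    have hcle : c < rs i := lt_of_le_of_lt hcs (Nat.mod_lt _ (hri_pos i))
    rw [hVset, Finset.mem_filter]
    constructor
    · rw [Finset.mem_pi]
      intro r hr
      rw [hv2]
      dsimp only
      have := (hΔ _ (hriΔ i)).2
      split
      · simp only [Finset.mem_range]; omega
      · split <;> simp only [Finset.mem_range] <;> omega
    · have e1 : ∑ r ∈ Δ.attach, r.1 * v2 i a c r.1 r.2
          = ∑ r ∈ Δ, r * (if r = rs i then a else if r = 1 then c else 0) :=
        Finset.sum_attach Δ (fun r => r * (if r = rs i then a else if r = 1 then c else 0))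
      rw [e1]
      have e2 : ∑ r ∈ Δ, r * (if r = rs i then a else if r = 1 then c else 0)
          = ∑ r ∈ Δ, ((if r = rs i then rs i * a else 0) + (if r = 1 then c else 0)) := by
        apply Finset.sum_congr rfl
        intro r _
        by_cases h : r = rs i
        · subst h; simp [hri1 i]
        · by_cases h2 : r = 1
          · subst h2; simp [h]
          · simp [h, h2]
      rw [e2, Finset.sum_add_distrib,
        Finset.sum_ite_eq' Δ (rs i) (fun _ => rs i * a), if_pos (hriΔ i),
        Finset.sum_ite_eq' Δ 1 (fun _ => c), if_pos h1]
      have : rs i * a ≤ rs i * (q / rs i) := Nat.mul_le_mul_left _ ham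
      omega
  -- value of F on v0
  have Fv0 : ∀ j, F (v0 j) = (B 1 + j - 1).choose j := by
    intro j
    simp only [hF, hv0]
    rw [Finset.prod_attach Δ
      (fun r => (B r + (if r = 1 then j else 0) - 1).choose (if r = 1 then j else 0))]
    rw [← Finset.prod_subset (Finset.singleton_subset_iff.2 h1)
      (f := fun r => (B r + (if r = 1 then j else 0) - 1).choose (if r = 1 then j else 0))]
    · simp
    · intro x _ hx
      rw [Finset.mem_singleton] at hx
      rw [if_neg hx]
      simp
  -- value of F on v2
  have Fv2 : ∀ (i : Fin u) (a c : ℕ),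
      F (v2 i a c) = (B (rs i) + a - 1).choose a * (B 1 + c - 1).choose c := by
    intro i a c
    simp only [hF, hv2]
    rw [Finset.prod_attach Δ
      (fun r => (B r + (if r = rs i then a else if r = 1 then c else 0) - 1).choose
        (if r = rs i then a else if r = 1 then c else 0))]
    have hsub : ({rs i, 1} : Finset ℕ) ⊆ Δ := by
      intro x hx
      rw [Finset.mem_insert, Finset.mem_singleton] at hx
      rcases hx with rfl | rfl
      · exact hriΔ i
      · exact h1
    rw [← Finset.prod_subset hsub
      (f := fun r => (B r + (if r = rs i then a else if r = 1 then c else 0) - 1).choose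
        (if r = rs i then a else if r = 1 then c else 0))]
    · rw [Finset.prod_insert (Finset.notMem_singleton.2 (hri1 i))]
      rw [Finset.prod_singleton]
      have hne : ¬((1 : ℕ) = rs i) := fun h => hri1 i h.symm
      rw [if_pos rfl, if_neg hne, if_pos rfl]
    · intro x _ hx
      rw [Finset.mem_insert, Finset.mem_singleton] at hx
      push_neg at hx
      rw [if_neg hx.1, if_neg hx.2]
      simp
  -- the finsets
  set T0 : Finset ((a : ℕ) → a ∈ Δ → ℕ) := (Finset.range g).image v0 with hT0
  set Ti : Fin u → Finset ((a : ℕ) → a ∈ Δ → ℕ) := fun i =>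
    ((Finset.Icc 1 (q / rs i)) ×ˢ Finset.range (q % rs i + 1)).image
      (fun p => v2 i p.1 p.2) with hTi
  -- evaluation helpers
  have ev0_at : ∀ j (r : ℕ) (hr : r ∈ Δ), v0 j r hr = if r = 1 then j else 0 := by
    intro j r hr; rw [hv0]
  have ev2_at : ∀ (i : Fin u) a c (r : ℕ) (hr : r ∈ Δ),
      v2 i a c r hr = if r = rs i then a else if r = 1 then c else 0 := by
    intro i a c r hr; rw [hv2]
  -- disjointness: T0 vs Ti
  have hd0i : ∀ i : Fin u, ∀ x ∈ T0, x ∉ Ti i := by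
    intro i x hx0 hxi
    rw [hT0, Finset.mem_image] at hx0
    rw [hTi, Finset.mem_image] at hxi
    obtain ⟨j, _, rfl⟩ := hx0
    obtain ⟨p, hp, hpe⟩ := hxi
    rw [Finset.mem_product, Finset.mem_Icc] at hp
    have := congrFun (congrFun hpe (rs i)) (hriΔ i)
    simp only [hv0, hv2, if_pos rfl, if_neg (hri1 i)] at this
    omega
  -- disjointness: Ti vs Tj
  have hdij : ∀ i j : Fin u, i ≠ j → ∀ x ∈ Ti i, x ∉ Ti j := by
    intro i j hij x hxi hxj
    rw [hTi, Finset.mem_image] at hxi hxj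
    obtain ⟨p, hp, rfl⟩ := hxi
    obtain ⟨p', hp', hpe⟩ := hxj
    rw [Finset.mem_product, Finset.mem_Icc] at hp hp'
    have hne : rs i ≠ rs j := fun h => hij (hinj h)
    have := congrFun (congrFun hpe (rs j)) (hriΔ j)
    simp only [hv2, if_pos rfl, if_neg (Ne.symm hne), if_neg (hri1 j)] at this
    omega
  -- sums over the pieces
  have sumT0 : ∑ b ∈ T0, F b = (B 1 + q).choose q := by
    rw [hT0, Finset.sum_image]
    · have : ∑ j ∈ Finset.range g, F (v0 j) = ∑ j ∈ Finset.range g, (B 1 + j - 1).choose j :=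
        Finset.sum_congr rfl (fun j _ => Fv0 j)
      rw [this, show g = q + 1 by omega]
      exact hs' (B 1) q (hB 1 h1)
    · intro x _ y _ hxy
      have := congrFun (congrFun hxy 1) h1
      simpa [hv0] using this
  have sumTi : ∀ i : Fin u, ∑ b ∈ Ti i, F b
      = ((B (rs i) + q / rs i).choose (q / rs i) - 1) *
          (B 1 + q % rs i).choose (q % rs i) := by
    intro i
    rw [hTi, Finset.sum_image]
    · have e1 : ∑ p ∈ (Finset.Icc 1 (q / rs i)) ×ˢ Finset.range (q % rs i + 1),
          F (v2 i p.1 p.2)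
          = ∑ p ∈ (Finset.Icc 1 (q / rs i)) ×ˢ Finset.range (q % rs i + 1),
            (B (rs i) + p.1 - 1).choose p.1 * (B 1 + p.2 - 1).choose p.2 :=
        Finset.sum_congr rfl (fun p _ => Fv2 i p.1 p.2)
      rw [e1, Finset.sum_product]
      dsimp only
      rw [← Finset.sum_mul_sum]
      rw [hs'' (B (rs i)) (q / rs i) (hB _ (hriΔ i)), hs' (B 1) (q % rs i) (hB 1 h1)]
    · intro x hx y hy hxy
      have h1' := congrFun (congrFun hxy (rs i)) (hriΔ i)
      have h2' := congrFun (congrFun hxy 1) h1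
      simp only [hv2, if_pos rfl] at h1'
      have hne : ¬((1 : ℕ) = rs i) := fun h => hri1 i h.symm
      simp only [hv2, if_neg hne, if_pos rfl, if_true] at h2'
      exact Prod.ext h1' h2'
  -- assemble
  set Tbig : Finset ((a : ℕ) → a ∈ Δ → ℕ) :=
    T0 ∪ (Finset.univ : Finset (Fin u)).biUnion Ti with hTbig
  have hdisj : Disjoint T0 ((Finset.univ : Finset (Fin u)).biUnion Ti) := by
    rw [Finset.disjoint_left]
    intro x hx hxb
    rw [Finset.mem_biUnion] at hxb
    obtain ⟨i, _, hxi⟩ := hxb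
    exact hd0i i x hx hxi
  have hpw : ((Finset.univ : Finset (Fin u)) : Set (Fin u)).PairwiseDisjoint Ti := by
    intro i _ j _ hij
    rw [Function.onFun, Finset.disjoint_left]
    intro x hxi hxj
    exact hdij i j hij x hxi hxj
  have hsub : Tbig ⊆ Vset := by
    rw [hTbig]
    apply Finset.union_subset
    · intro x hx
      rw [hT0, Finset.mem_image] at hx
      obtain ⟨j, hj, rfl⟩ := hx
      rw [Finset.mem_range] at hj
      exact memv0 j (by omega)
    · intro x hx
      rw [Finset.mem_biUnion] at hx
      obtain ⟨i, _, hxi⟩ := hx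
      rw [hTi, Finset.mem_image] at hxi
      obtain ⟨p, hp, rfl⟩ := hxi
      rw [Finset.mem_product, Finset.mem_Icc, Finset.mem_range] at hp
      exact memv2 i p.1 p.2 hp.1.1 hp.1.2 (by omega)
  calc (B 1 + q).choose q +
      ∑ i : Fin u, ((B (rs i) + q / rs i).choose (q / rs i) - 1) *
        (B 1 + q % rs i).choose (q % rs i)
      = ∑ b ∈ Tbig, F b := by
        rw [hTbig, Finset.sum_union hdisj, Finset.sum_biUnion hpw, sumT0]
        congr 1
        exact (Finset.sum_congr rfl (fun i _ => sumTi i)).symm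
    _ ≤ ∑ b ∈ Vset, F b := Finset.sum_le_sum_of_subset hsub
end

section
/- Let q > 1 be a real number and g ≥ 1 an integer, and let π_1, …, π_g be complex numbers with |π_i| = √q for each i, such that ∑_{i=1}^g (π_i + conj(π_i)) = q + 1 − B for some real B. Then ∑_{i=1}^{g} 1/|1 − π_i|² ≤ ((g+1)(q+1) − B) / (q−1)². -/
theorem stmt_12 (q : ℝ) (hq : 1 < q) (g : ℕ) (hg : 1 ≤ g) (B : ℝ)
    (π : Fin g → ℂ) (habs : ∀ i, ‖π i‖ = Real.sqrt q)
    (hsum : ∑ i, (π i + (starRingEnd ℂ) (π i)) = (q : ℂ) + 1 - (B : ℂ)) :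
    ∑ i, 1 / ‖1 - π i‖ ^ 2 ≤ ((g + 1) * (q + 1) - B) / (q - 1) ^ 2 := by
  have hq0 : 0 < q := by linarith
  set t : Fin g → ℝ := fun i => (π i).re with ht
  have hns : ∀ i, (π i).re ^ 2 + (π i).im ^ 2 = q := by
    intro i
    have h : Complex.normSq (π i) = q := by
      rw [← Complex.sq_norm, habs i, Real.sq_sqrt hq0.le]
    rw [Complex.normSq_apply] at h
    nlinarith [h]
  have htq : ∀ i, (t i) ^ 2 ≤ q := by
    intro i
    have := hns i
    nlinarith [sq_nonneg (π i).im]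
  have hnorm : ∀ i, ‖1 - π i‖ ^ 2 = 1 + q - 2 * t i := by
    intro i
    rw [Complex.sq_norm, Complex.normSq_apply]
    have h2 := hns i
    simp only [Complex.sub_re, Complex.sub_im, Complex.one_re, Complex.one_im, ht]
    nlinarith [h2]
  have hpos : ∀ i, 0 < 1 + q - 2 * t i := by
    intro i
    nlinarith [htq i, sq_nonneg (q - 1)]
  have hden : (0:ℝ) < (q - 1) ^ 2 := by nlinarith
  have hsumt : ∑ i, 2 * t i = q + 1 - B := by
    have h : ∀ i ∈ Finset.univ, π i + (starRingEnd ℂ) (π i) = ((2 * t i : ℝ) : ℂ) := by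
      intro i _
      rw [Complex.add_conj]
    rw [Finset.sum_congr rfl h, ← Complex.ofReal_sum] at hsum
    have : ((∑ i, 2 * t i : ℝ) : ℂ) = ((q + 1 - B : ℝ) : ℂ) := by
      rw [hsum]; push_cast; ring
    exact_mod_cast this
  have hterm : ∀ i ∈ Finset.univ, 1 / ‖1 - π i‖ ^ 2
      ≤ (q + 1 + 2 * t i) / (q - 1) ^ 2 := by
    intro i _
    rw [hnorm i, div_le_div_iff₀ (hpos i) hden]
    nlinarith [htq i]
  calc ∑ i, 1 / ‖1 - π i‖ ^ 2
      ≤ ∑ i, (q + 1 + 2 * t i) / (q - 1) ^ 2 := Finset.sum_le_sum hterm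
    _ = ((g : ℝ) * (q + 1) + ∑ i, 2 * t i) / (q - 1) ^ 2 := by
        rw [← Finset.sum_div, Finset.sum_add_distrib, Finset.sum_const,
          Finset.card_fin, nsmul_eq_mul]
    _ = ((g + 1) * (q + 1) - B) / (q - 1) ^ 2 := by
        rw [hsumt]; ring_nf
end

section
/- Let q > 1 be a real number and g ≥ 1 an integer, and let π_1, …, π_g be complex numbers with |π_i| = √q for each i, such that ∑_{i=1}^g (π_i + conj(π_i)) = q + 1 − B for some real B. Then ∑_{i=1}^{g} 1/|1 − π_i|² ≥ ((g+1)(q+1) − B) / (q+1)². -/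
theorem stmt_13 (q : ℝ) (hq : 1 < q) (g : ℕ) (hg : 1 ≤ g) (B : ℝ)
    (π : Fin g → ℂ) (habs : ∀ i, ‖π i‖ = Real.sqrt q)
    (hsum : ∑ i, (π i + (starRingEnd ℂ) (π i)) = (q : ℂ) + 1 - (B : ℂ)) :
    ((g + 1) * (q + 1) - B) / (q + 1) ^ 2 ≤ ∑ i, 1 / ‖1 - π i‖ ^ 2 := by
  have hq0 : (0:ℝ) < q := by linarith
  have hsq : ∀ i, (π i).re ^ 2 + (π i).im ^ 2 = q := by
    intro i
    have h := Complex.sq_norm (π i)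
    rw [habs i, Real.sq_sqrt hq0.le, Complex.normSq_apply] at h
    nlinarith [h]
  have hx : ∀ i, ‖1 - π i‖ ^ 2 = 1 + q - 2 * (π i).re := by
    intro i
    rw [Complex.sq_norm, Complex.normSq_apply]
    have := hsq i
    simp only [Complex.sub_re, Complex.sub_im, Complex.one_re, Complex.one_im]
    nlinarith [this]
  have hxpos : ∀ i, 0 < ‖1 - π i‖ ^ 2 := by
    intro i
    have hne : (1 : ℂ) - π i ≠ 0 := by
      intro h
      have : π i = 1 := by linear_combination -h
      have h2 := habs i
      rw [this] at h2
      simp at h2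
      nlinarith [Real.sq_sqrt hq0.le, h2]
    exact pow_pos (norm_pos_iff.mpr hne) 2
  have hre : ∑ i, 2 * (π i).re = q + 1 - B := by
    have h := congrArg Complex.re hsum
    rw [Complex.re_sum] at h
    simp only [Complex.add_re, Complex.conj_re, Complex.sub_re, Complex.add_re,
      Complex.ofReal_re, Complex.one_re] at h
    calc ∑ i, 2 * (π i).re = ∑ i, ((π i).re + (π i).re) := by
          apply Finset.sum_congr rfl; intro i _; ring
      _ = q + 1 - B := h
  have key : ∀ i ∈ Finset.univ, (2 * (q + 1) - ‖1 - π i‖ ^ 2) / (q + 1) ^ 2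
      ≤ 1 / ‖1 - π i‖ ^ 2 := by
    intro i _
    rw [div_le_div_iff₀ (by positivity) (hxpos i)]
    nlinarith [sq_nonneg (q + 1 - ‖1 - π i‖ ^ 2), hxpos i]
  have hsum2 : ∑ i, (2 * (q + 1) - ‖1 - π i‖ ^ 2) / (q + 1) ^ 2
      = ((g + 1) * (q + 1) - B) / (q + 1) ^ 2 := by
    rw [← Finset.sum_div]
    congr 1
    have : ∑ i, (2 * (q + 1) - ‖1 - π i‖ ^ 2)
        = ∑ i, (2 * (q + 1) - (1 + q) + 2 * (π i).re) := by
      apply Finset.sum_congr rfl; intro i _; rw [hx i]; ring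
    rw [this, Finset.sum_add_distrib, hre, Finset.sum_const, Finset.card_univ,
      Fintype.card_fin]
    push_cast
    ring
  calc ((g + 1) * (q + 1) - B) / (q + 1) ^ 2
      = ∑ i, (2 * (q + 1) - ‖1 - π i‖ ^ 2) / (q + 1) ^ 2 := hsum2.symm
    _ ≤ ∑ i, 1 / ‖1 - π i‖ ^ 2 := Finset.sum_le_sum key
end
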